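/- arXiv:2303.09365 — 2 statements merged into one kernel-verified Lean document; each statement's English description precedes it below -/
import Mathlib

section
/- For every integer k ≥ 8, there exists a graph G that is (k−1)-colorable, can be obtained from a bipartite graph by adding ℓ edges for some ℓ < C(k,2) (binomial coefficient k choose 2), and satisfies Kc(G, k) ≥ 2. (This refutes the Higashitani–Matsumoto conjecture for all k ≥ 8.) -/
open SimpleGraph

/-- The spanning subgraph of `G` consisting of the edges both of whose endpoints
receive color `i` or color `j` under `φ`. -/
def kempeSubgraph {V : Type*} (G : SimpleGraph V) {k : ℕ} (φ : V → Fin k) (i j : Fin k) :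
    SimpleGraph V where
  Adj u v := G.Adj u v ∧ (φ u = i ∨ φ u = j) ∧ (φ v = i ∨ φ v = j)
  symm := ⟨fun u v ⟨h, hu, hv⟩ => ⟨h.symm, hv, hu⟩⟩
  loopless := ⟨fun v h => G.loopless.irrefl v h.1⟩

/-- `ψ` is obtained from `φ` by a single `i,j`-Kempe swap:  the colors `i` and `j` are
interchanged on the connected component (of the subgraph induced by colors `i,j`)
containing `w`, and nothing else changes. -/
def IsKempeSwap {V : Type*} (G : SimpleGraph V) {k : ℕ}
    (φ ψ : G.Coloring (Fin k)) : Prop :=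
  ∃ (i j : Fin k) (w : V), ∀ v : V,
    ((kempeSubgraph G (fun x => φ x) i j).Reachable w v → ψ v = Equiv.swap i j (φ v)) ∧
    (¬ (kempeSubgraph G (fun x => φ x) i j).Reachable w v → ψ v = φ v)

/-- Kempe `k`-equivalence of proper `k`-colorings:  one can be transformed into the
other by a sequence of Kempe swaps. -/
def KempeEquiv {V : Type*} (G : SimpleGraph V) (k : ℕ)
    (φ ψ : G.Coloring (Fin k)) : Prop :=
  Relation.EqvGen (IsKempeSwap G) φ ψ

/-- `Kc G k` is the number of Kempe equivalence classes of proper `k`-colorings of `G`. -/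
noncomputable def Kc {V : Type*} (G : SimpleGraph V) (k : ℕ) : ℕ :=
  Nat.card (Quot (KempeEquiv G k))

/-- `G` can be obtained from a bipartite graph by adding `ℓ` edges. -/
def BipartitePlus {V : Type*} (G : SimpleGraph V) (ℓ : ℕ) : Prop :=
  ∃ E : Finset (Sym2 V), E.card = ℓ ∧ ↑E ⊆ G.edgeSet ∧
    (G.deleteEdges ↑E).Colorable 2

/-!
The graph is the join of a nine-vertex gadget `H` with a clique on `k - 4` vertices. `H` is the
subgraph of the tensor product `K₄ × K₃` induced by nine of its twelve vertices, so both coordinate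
projections are proper colorings. Under the first one any two color classes of `H` span a connected
subgraph, and a clique vertex is adjacent to everything, so the induced `k`-coloring `φ` of the
join is Kempe-frozen: every Kempe swap only permutes colors, and the Kempe class of `φ` consists of
colorings using all `k` colors. The second projection gives a `(k - 1)`-coloring, which therefore
lies in another class. Removing the edges inside `{v₀} ∪ K_{k-4}` and inside `H - v₀` leaves a
bipartite graph; there are at most `C(k - 3, 2) + 16 < C(k, 2)` of them once `k ≥ 8`.
-/

open Finset

namespace SimpleGraph

variable {V : Type*} {G : SimpleGraph V} {k : ℕ}

instance [DecidableRel G.Adj] (φ : V → Fin k) (i j : Fin k) :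
    DecidableRel (kempeSubgraph G φ i j).Adj := fun u v => by
  unfold kempeSubgraph; infer_instance

lemma kempeSubgraph_congr {f g : V → Fin k} {i j i' j' : Fin k}
    (h : ∀ v, (f v = i ∨ f v = j) ↔ (g v = i' ∨ g v = j')) :
    kempeSubgraph G f i j = kempeSubgraph G g i' j' := by
  ext u v
  exact and_congr_right fun _ => and_congr (h u) (h v)

lemma kempeSubgraph_comm (f : V → Fin k) (i j : Fin k) :
    kempeSubgraph G f i j = kempeSubgraph G f j i :=
  kempeSubgraph_congr fun _ => or_comm

lemma kempeSubgraph_comp_perm (f : V → Fin k) (σ : Equiv.Perm (Fin k)) (i j : Fin k) :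
    kempeSubgraph G (σ ∘ f) i j = kempeSubgraph G f (σ.symm i) (σ.symm j) :=
  kempeSubgraph_congr fun v => by
    simp only [Function.comp_apply, ← Equiv.eq_symm_apply]

lemma eq_or_mem_of_reachable_kempeSubgraph {f : V → Fin k} {i j : Fin k} {u v : V}
    (h : (kempeSubgraph G f i j).Reachable u v) :
    u = v ∨ ((f u = i ∨ f u = j) ∧ (f v = i ∨ f v = j)) := by
  obtain ⟨p⟩ := h
  induction p with
  | nil => exact .inl rfl
  | cons hadj _ ih =>
    refine .inr ⟨hadj.2.1, ?_⟩
    rcases ih with rfl | ⟨_, hv⟩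
    exacts [hadj.2.2, hv]

/-- Every bichromatic subgraph is connected, so each Kempe swap interchanges two whole
color classes. -/
def IsKempeFrozen (G : SimpleGraph V) (f : V → Fin k) : Prop :=
  ∀ i j, i ≠ j → ∀ u v, (f u = i ∨ f u = j) → (f v = i ∨ f v = j) →
    (kempeSubgraph G f i j).Reachable u v

lemma IsKempeFrozen.comp_perm {f : V → Fin k} (hf : IsKempeFrozen G f)
    (σ : Equiv.Perm (Fin k)) : IsKempeFrozen G (σ ∘ f) := by
  intro i j hij u v hu hv
  rw [kempeSubgraph_comp_perm]
  simp only [Function.comp_apply, ← Equiv.eq_symm_apply] at hu hv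
  exact hf _ _ (σ.symm.injective.ne hij) u v hu hv

lemma reachable_kempeSubgraph_of_universal {f : V → Fin k} {x : V}
    (hx : ∀ v, v ≠ x → G.Adj x v) {i j : Fin k} (hxj : f x = j) {u v : V}
    (hu : f u = i ∨ f u = j) (hv : f v = i ∨ f v = j) :
    (kempeSubgraph G f i j).Reachable u v := by
  have key : ∀ u, (f u = i ∨ f u = j) → (kempeSubgraph G f i j).Reachable x u := by
    intro u hu
    by_cases hux : u = x
    · rw [hux]
    · exact Adj.reachable ⟨hx u hux, .inr hxj, hu⟩
  exact (key u hu).symm.trans (key v hv)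

lemma isKempeSwap_symm {c c' : G.Coloring (Fin k)} (h : IsKempeSwap G c c') :
    IsKempeSwap G c' c := by
  obtain ⟨i, j, w, H⟩ := h
  have hgr : kempeSubgraph G (fun x => c' x) i j = kempeSubgraph G (fun x => c x) i j := by
    refine kempeSubgraph_congr fun v => ?_
    by_cases hr : (kempeSubgraph G (fun x => c x) i j).Reachable w v
    · rw [(H v).1 hr, Equiv.swap_apply_eq_iff, Equiv.swap_apply_eq_iff, Equiv.swap_apply_left,
        Equiv.swap_apply_right, or_comm]
    · rw [(H v).2 hr]
  refine ⟨i, j, w, fun v => ?_⟩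
  rw [hgr]
  refine ⟨fun hr => ?_, fun hr => ((H v).2 hr).symm⟩
  rw [(H v).1 hr, Equiv.swap_apply_self]

lemma IsKempeFrozen.exists_perm_of_isKempeSwap {c c' : G.Coloring (Fin k)}
    (hc : IsKempeFrozen G c) (h : IsKempeSwap G c c') :
    ∃ σ : Equiv.Perm (Fin k), ∀ v, c' v = σ (c v) := by
  obtain ⟨i, j, w, H⟩ := h
  by_cases hw : (c w = i ∨ c w = j) ∧ i ≠ j
  · refine ⟨Equiv.swap i j, fun v => ?_⟩
    by_cases hr : (kempeSubgraph G (fun x => c x) i j).Reachable w v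
    · exact (H v).1 hr
    · have hv : ¬ (c v = i ∨ c v = j) := fun hv => hr (hc i j hw.2 w v hw.1 hv)
      rw [(H v).2 hr, Equiv.swap_apply_of_ne_of_ne (not_or.mp hv).1 (not_or.mp hv).2]
  · refine ⟨Equiv.refl _, fun v => ?_⟩
    by_cases hr : (kempeSubgraph G (fun x => c x) i j).Reachable w v
    · rw [(H v).1 hr, Equiv.refl_apply]
      by_cases hij : i = j
      · rw [hij, Equiv.swap_self, Equiv.refl_apply]
      · have hw' : ¬ (c w = i ∨ c w = j) := fun hw' => hw ⟨hw', hij⟩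
        obtain rfl : w = v := (eq_or_mem_of_reachable_kempeSubgraph hr).resolve_right
          fun h => hw' h.1
        exact Equiv.swap_apply_of_ne_of_ne (not_or.mp hw').1 (not_or.mp hw').2
    · exact (H v).2 hr

lemma IsKempeFrozen.exists_perm_of_kempeEquiv {φ ψ : G.Coloring (Fin k)}
    (hφ : IsKempeFrozen G φ) (h : KempeEquiv G k φ ψ) :
    ∃ σ : Equiv.Perm (Fin k), ∀ v, ψ v = σ (φ v) := by
  let P : G.Coloring (Fin k) → Prop := fun c => ∃ σ : Equiv.Perm (Fin k), ∀ v, c v = σ (φ v)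
  have step : ∀ c c', IsKempeSwap G c c' → P c → P c' := by
    rintro c c' hcc' ⟨σ, hσ⟩
    have hc : IsKempeFrozen G c := by
      convert hφ.comp_perm σ
      exact funext hσ
    obtain ⟨τ, hτ⟩ := hc.exists_perm_of_isKempeSwap hcc'
    exact ⟨σ.trans τ, fun v => by rw [hτ, hσ]; rfl⟩
  have hP : ∀ c c', KempeEquiv G k c c' → (P c ↔ P c') := by
    intro c c' hcc'
    induction hcc' with
    | rel c c' hcc' => exact ⟨step c c' hcc', step c' c (isKempeSwap_symm hcc')⟩
    | refl => exact Iff.rfl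
    | symm _ _ _ ih => exact ih.symm
    | trans _ _ _ _ _ ih₁ ih₂ => exact ih₁.trans ih₂
  exact (hP φ ψ h).mp ⟨Equiv.refl _, fun _ => rfl⟩

theorem two_le_Kc_of_isKempeFrozen [Finite V] {φ : G.Coloring (Fin k)}
    (hφ : IsKempeFrozen G φ) (hsurj : Function.Surjective φ) {m : ℕ} (hm : m < k)
    (hG : G.Colorable m) : 2 ≤ Kc G k := by
  obtain ⟨ψ₀⟩ := hG
  let ψ : G.Coloring (Fin k) := (Embedding.completeGraph (Fin.castLEEmb hm.le)).toHom.comp ψ₀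
  have hψ : ¬ KempeEquiv G k φ ψ := by
    intro h
    obtain ⟨σ, hσ⟩ := hφ.exists_perm_of_kempeEquiv h
    have hsurjψ : Function.Surjective (Fin.castLE hm.le ∘ ψ₀) := by
      intro c
      obtain ⟨v, hv⟩ := (σ.surjective.comp hsurj) c
      exact ⟨v, (hσ v).trans hv⟩
    have := Fintype.card_le_of_surjective _ hsurjψ.of_comp
    simp only [Fintype.card_fin] at this
    omega
  have : Finite (G.Coloring (Fin k)) := Finite.of_injective _ DFunLike.coe_injective
  refine Finite.one_lt_card_iff_nontrivial.mpr ⟨Quot.mk _ φ, Quot.mk _ ψ, fun h =>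
    hψ ((Relation.EqvGen.is_equivalence _).eqvGen_iff.mp (Quot.eq.mp h))⟩

lemma bipartitePlus_card_monochromatic [Fintype V] [DecidableRel G.Adj] (χ : V → Fin 2) :
    BipartitePlus G #{e ∈ G.edgeFinset | (e.map χ).IsDiag} := by
  refine ⟨_, rfl, fun e he => mem_edgeFinset.mp (mem_filter.mp he).1, ⟨Coloring.mk χ ?_⟩⟩
  intro u v huv hχ
  rw [deleteEdges_adj] at huv
  exact huv.2 (mem_filter.mpr ⟨mem_edgeFinset.mpr huv.1, by simpa using hχ⟩)

/-- The join of `H` with the complete graph on `Fin b`: the vertices `Fin.natAdd a _` form a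
clique and are adjacent to every vertex `Fin.castAdd b _` of the copy of `H`. -/
def joinClique {a : ℕ} (H : SimpleGraph (Fin a)) (b : ℕ) : SimpleGraph (Fin (a + b)) where
  Adj u v := u ≠ v ∧ ∀ x y, u = Fin.castAdd b x → v = Fin.castAdd b y → H.Adj x y
  symm := ⟨fun _ _ h => ⟨h.1.symm, fun x y hu hv => (h.2 y x hv hu).symm⟩⟩
  loopless := ⟨fun _ h => h.1 rfl⟩

section joinClique

variable {a b c : ℕ} {H : SimpleGraph (Fin a)}

instance [DecidableRel H.Adj] : DecidableRel (H.joinClique b).Adj := fun u v => by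
  unfold joinClique; infer_instance

@[simp]
lemma joinClique_adj_castAdd {x y : Fin a} :
    (H.joinClique b).Adj (Fin.castAdd b x) (Fin.castAdd b y) ↔ H.Adj x y := by
  refine ⟨fun h => h.2 x y rfl rfl, fun h => ⟨?_, ?_⟩⟩
  · simpa using h.ne
  · rintro x' y' hx hy
    rwa [← Fin.castAdd_injective _ _ hx, ← Fin.castAdd_injective _ _ hy]

lemma joinClique_adj_natAdd {y : Fin b} {v : Fin (a + b)} (hv : v ≠ Fin.natAdd a y) :
    (H.joinClique b).Adj (Fin.natAdd a y) v := by
  refine ⟨hv.symm, fun x _ hx _ => ?_⟩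
  have := congrArg Fin.val hx
  simp only [Fin.val_natAdd, Fin.val_castAdd] at this
  omega

def Coloring.joinClique (f : H.Coloring (Fin c)) (b : ℕ) :
    (H.joinClique b).Coloring (Fin (c + b)) :=
  Coloring.mk (Fin.addCases (fun x => Fin.castAdd b (f x)) (Fin.natAdd c)) <| by
    intro u v huv
    induction u using Fin.addCases with
    | left x => induction v using Fin.addCases with
      | left y => simpa using f.valid (joinClique_adj_castAdd.mp huv)
      | right y => simp [Fin.ext_iff]; omega
    | right x => induction v using Fin.addCases with
      | left y => simp [Fin.ext_iff]; omega
      | right y => simpa using huv.ne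

@[simp]
lemma Coloring.joinClique_castAdd (f : H.Coloring (Fin c)) (x : Fin a) :
    f.joinClique b (Fin.castAdd b x) = Fin.castAdd b (f x) := by
  simp only [Coloring.joinClique, Coloring.mk, RelHom.coeFn_mk, Fin.addCases_left]

@[simp]
lemma Coloring.joinClique_natAdd (f : H.Coloring (Fin c)) (y : Fin b) :
    f.joinClique b (Fin.natAdd a y) = Fin.natAdd c y := by
  simp only [Coloring.joinClique, Coloring.mk, RelHom.coeFn_mk, Fin.addCases_right]

lemma Colorable.joinClique (hH : H.Colorable c) (b : ℕ) : (H.joinClique b).Colorable (c + b) :=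
  let ⟨f⟩ := hH; ⟨f.joinClique b⟩

lemma Coloring.joinClique_surjective {f : H.Coloring (Fin c)} (hf : Function.Surjective f) :
    Function.Surjective (f.joinClique b) := by
  intro i
  induction i using Fin.addCases with
  | left i => obtain ⟨x, rfl⟩ := hf i; exact ⟨_, f.joinClique_castAdd x⟩
  | right y => exact ⟨_, f.joinClique_natAdd y⟩

lemma IsKempeFrozen.reachable_joinClique_castAdd {f : H.Coloring (Fin c)}
    (hf : IsKempeFrozen H f) {i j : Fin c} (hij : i ≠ j) {u v : Fin (a + b)}
    (hu : f.joinClique b u = Fin.castAdd b i ∨ f.joinClique b u = Fin.castAdd b j)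
    (hv : f.joinClique b v = Fin.castAdd b i ∨ f.joinClique b v = Fin.castAdd b j) :
    (kempeSubgraph (H.joinClique b) (f.joinClique b) (Fin.castAdd b i)
      (Fin.castAdd b j)).Reachable u v := by
  have mem_H : ∀ w, (f.joinClique b w = Fin.castAdd b i ∨ f.joinClique b w = Fin.castAdd b j) →
      ∃ x, w = Fin.castAdd b x ∧ (f x = i ∨ f x = j) := by
    intro w hw
    induction w using Fin.addCases with
    | left x => exact ⟨x, rfl, by simpa using hw⟩
    | right y => simp [Fin.ext_iff] at hw; omega
  obtain ⟨x, rfl, hx⟩ := mem_H u hu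
  obtain ⟨y, rfl, hy⟩ := mem_H v hv
  let φ : kempeSubgraph H f i j →g kempeSubgraph (H.joinClique b) (f.joinClique b)
      (Fin.castAdd b i) (Fin.castAdd b j) :=
    ⟨Fin.castAdd b, fun h => ⟨joinClique_adj_castAdd.mpr h.1, by simpa using h.2⟩⟩
  exact (hf i j hij x y hx hy).map φ

lemma IsKempeFrozen.joinClique {f : H.Coloring (Fin c)} (hf : IsKempeFrozen H f) :
    IsKempeFrozen (H.joinClique b) (f.joinClique b) := by
  intro i j hij u v hu hv
  induction j using Fin.addCases with
  | right j =>
    exact reachable_kempeSubgraph_of_universal (fun _ => joinClique_adj_natAdd)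
      (f.joinClique_natAdd j) hu hv
  | left j =>
    induction i using Fin.addCases with
    | right i =>
      rw [kempeSubgraph_comm]
      exact reachable_kempeSubgraph_of_universal (fun _ => joinClique_adj_natAdd)
        (f.joinClique_natAdd i) hu.symm hv.symm
    | left i => exact hf.reachable_joinClique_castAdd (mt (congrArg _) hij) hu hv

lemma card_monochromatic_joinClique_le [DecidableRel H.Adj] (χ : Fin a → Fin 2) :
    #{e ∈ (H.joinClique b).edgeFinset | (e.map (Fin.addCases χ fun _ => 0)).IsDiag} ≤
      #{e ∈ H.edgeFinset | (e.map χ).IsDiag} + (#{x | χ x = 0} + b).choose 2 := by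
  set A : Finset (Fin (a + b)) :=
    ({x | χ x = 0} : Finset (Fin a)).map (Fin.castAddEmb b) ∪ univ.map (Fin.natAddEmb a)
  have hA : #A ≤ #{x | χ x = 0} + b := by
    refine (card_union_le _ _).trans ?_
    simp
  have hsub : {e ∈ (H.joinClique b).edgeFinset | (e.map (Fin.addCases χ fun _ => 0)).IsDiag} ⊆
      {e ∈ H.edgeFinset | (e.map χ).IsDiag}.image (Sym2.map (Fin.castAdd b)) ∪
        A.offDiag.image Sym2.mk.uncurry := by
    have mem_A : ∀ w, Fin.addCases (motive := fun _ => Fin 2) χ (fun _ => 0) w = 0 → w ∈ A := by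
      intro w hw
      induction w using Fin.addCases with
      | left x => simp_all [A]
      | right y => simp [A]
    intro e he
    induction e using Sym2.ind with | _ u v =>
    simp only [mem_filter, mem_edgeFinset, mem_edgeSet, Sym2.map_mk,
      Sym2.mk_isDiag_iff] at he
    obtain ⟨huv, hχ⟩ := he
    suffices Fin.addCases (motive := fun _ => Fin 2) χ (fun _ => 0) u = 0 →
        s(u, v) ∈ A.offDiag.image Sym2.mk.uncurry by
      induction u using Fin.addCases with
      | left x => induction v using Fin.addCases with
        | left y =>
          refine mem_union_left _ (mem_image.mpr ⟨s(x, y), ?_, Sym2.map_mk _ _ _⟩)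
          simp_all
        | right y => exact mem_union_right _ (this (by simpa using hχ))
      | right y => exact mem_union_right _ (this (by simp))
    intro hu
    exact mem_image.mpr ⟨(u, v), mem_offDiag.mpr ⟨mem_A u hu, mem_A v (hχ ▸ hu), huv.ne⟩, rfl⟩
  calc _ ≤ _ := card_le_card hsub
    _ ≤ _ := card_union_le _ _
    _ ≤ _ := by
      rw [Sym2.card_image_offDiag]
      exact add_le_add card_image_le (Nat.choose_le_choose 2 hA)

end joinClique

end SimpleGraph

def gadgetLabel : Fin 9 → Fin 4 × Fin 3 :=
  ![(0, 0), (0, 1), (1, 0), (1, 2), (2, 1), (2, 2), (3, 0), (3, 1), (3, 2)]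

def gadget : SimpleGraph (Fin 9) where
  Adj x y := (gadgetLabel x).1 ≠ (gadgetLabel y).1 ∧ (gadgetLabel x).2 ≠ (gadgetLabel y).2
  symm := ⟨fun _ _ h => ⟨h.1.symm, h.2.symm⟩⟩
  loopless := ⟨fun _ h => h.1 rfl⟩

instance : DecidableRel gadget.Adj := fun _ _ => by unfold gadget; infer_instance

def gadgetColoring₄ : gadget.Coloring (Fin 4) := Coloring.mk (fun x => (gadgetLabel x).1) And.left

def gadgetColoring₃ : gadget.Coloring (Fin 3) := Coloring.mk (fun x => (gadgetLabel x).2) And.right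

lemma gadgetColoring₄_surjective : Function.Surjective gadgetColoring₄ := by decide

lemma isKempeFrozen_gadgetColoring₄ : IsKempeFrozen gadget gadgetColoring₄ := by
  unfold IsKempeFrozen; decide

def gadgetSide : Fin 9 → Fin 2 := fun x => if x = 0 then 0 else 1

lemma card_gadgetSide_eq_zero : #{x | gadgetSide x = 0} = 1 := by decide

lemma card_monochromatic_gadget : #{e ∈ gadget.edgeFinset | (e.map gadgetSide).IsDiag} = 16 := by
  decide

lemma choose_two_four_add (b : ℕ) : (4 + b).choose 2 = (1 + b).choose 2 + 3 * b + 6 := by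
  simp [show 4 + b = b + 1 + 1 + 1 + 1 by omega, show 1 + b = b + 1 by omega, Nat.choose_succ_succ']
  ring

/-- For every `k ≥ 8` there is a `(k-1)`-colorable graph obtained from a bipartite
graph by adding fewer than `C(k,2)` edges with at least two Kempe equivalence
classes of `k`-colorings. -/
theorem stmt0 (k : ℕ) (hk : 8 ≤ k) :
    ∃ (n : ℕ) (G : SimpleGraph (Fin n)),
      G.Colorable (k - 1) ∧
      (∃ ℓ : ℕ, ℓ < Nat.choose k 2 ∧ BipartitePlus G ℓ) ∧
      2 ≤ Kc G k := by
  obtain ⟨b, rfl⟩ : ∃ b, k = 4 + b := ⟨k - 4, by omega⟩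
  have hcol : (gadget.joinClique b).Colorable (3 + b) :=
    gadgetColoring₃.colorable.joinClique b
  refine ⟨9 + b, gadget.joinClique b, by rwa [show 4 + b - 1 = 3 + b by omega], ?_, ?_⟩
  · refine ⟨_, ?_, bipartitePlus_card_monochromatic (Fin.addCases gadgetSide fun _ => 0)⟩
    have := card_monochromatic_joinClique_le (H := gadget) (b := b) gadgetSide
    rw [card_monochromatic_gadget, card_gadgetSide_eq_zero] at this
    rw [choose_two_four_add]
    omega
  · exact two_le_Kc_of_isKempeFrozen isKempeFrozen_gadgetColoring₄.joinClique
      (Coloring.joinClique_surjective gadgetColoring₄_surjective) (by omega) hcol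
end

section
/- Let H = K₃ × K₄ be the graph on pairs (i, j) with i ∈ {1,2,3}, j ∈ {1,2,3,4}, where (i₁, j₁) is adjacent to (i₂, j₂) if and only if i₁ ≠ i₂ and j₁ ≠ j₂, and let β be the proper 4-coloring of H assigning to each vertex (i, j) the color j. Then for every pair of distinct colors a, b ∈ {1,2,3,4}, the subgraph of H induced by the vertices colored a or b under β is connected. -/
open SimpleGraph

/-- `K₃ × K₄`: the categorical (tensor) product of complete graphs, on
`Fin 3 × Fin 4`, where `(i₁,j₁)` is adjacent to `(i₂,j₂)` iff `i₁ ≠ i₂` and `j₁ ≠ j₂`. -/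
def Htensor : SimpleGraph (Fin 3 × Fin 4) where
  Adj p q := p.1 ≠ q.1 ∧ p.2 ≠ q.2
  symm := ⟨fun p q h => ⟨h.1.symm, h.2.symm⟩⟩
  loopless := ⟨fun p h => h.1 rfl⟩

/-- The vertices of `Ĥ`: pairs `(i,j)` with `i ∈ Fin 3`, `j ∈ Fin 4`, excluding the
three "diagonal" pairs (which correspond to `(1,1), (2,2), (3,3)` in the 1-indexed
description). -/
abbrev HhatVert : Type := {p : Fin 3 × Fin 4 // (p.1 : ℕ) ≠ (p.2 : ℕ)}

/-- The graph `Ĥ`, i.e. `K₃ × K₄` with the three diagonal vertices deleted. -/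
def Hhat : SimpleGraph HhatVert where
  Adj p q := p.1.1 ≠ q.1.1 ∧ p.1.2 ≠ q.1.2
  symm := ⟨fun p q h => ⟨h.1.symm, h.2.symm⟩⟩
  loopless := ⟨fun p h => h.1 rfl⟩

/-! The vertices coloured `a` or `b` induce `K_α × K₂`, the bipartite double cover of the
complete graph `K_α`, which is connected because `K_α` (having at least three vertices) contains
a triangle: two vertices of the same colour have a common neighbour in a third row, and two
vertices of different colours are adjacent unless they share a row. -/

def completeTensor (α β : Type*) : SimpleGraph (α × β) where
  Adj p q := p.1 ≠ q.1 ∧ p.2 ≠ q.2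
  symm := ⟨fun _ _ h => ⟨h.1.symm, h.2.symm⟩⟩
  loopless := ⟨fun _ h => h.1 rfl⟩

theorem Htensor_eq_completeTensor : Htensor = completeTensor (Fin 3) (Fin 4) := rfl

namespace completeTensor

variable {α β : Type*} {a b : β}

theorem reachable_induce_of_snd_eq (hα : 3 ≤ ENat.card α) (hab : a ≠ b)
    {u v : {p : α × β | p.2 = a ∨ p.2 = b}} (huv : u.1.2 = v.1.2) :
    ((completeTensor α β).induce {p | p.2 = a ∨ p.2 = b}).Reachable u v := by
  obtain ⟨k, hku, hkv⟩ := ENat.exists_ne_ne_of_three_le hα u.1.1 v.1.1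
  obtain ⟨d, hd, hdu⟩ : ∃ d, (d = a ∨ d = b) ∧ d ≠ u.1.2 := by
    rcases u.2 with hu | hu
    · exact ⟨b, .inr rfl, by rw [hu]; exact hab.symm⟩
    · exact ⟨a, .inl rfl, by rw [hu]; exact hab⟩
  let w : {p : α × β | p.2 = a ∨ p.2 = b} := ⟨(k, d), hd⟩
  have huw : ((completeTensor α β).induce _).Adj u w := ⟨hku.symm, hdu.symm⟩
  have hwv : ((completeTensor α β).induce _).Adj w v := ⟨hkv, huv ▸ hdu⟩
  exact huw.reachable.trans hwv.reachable

theorem connected_induce_snd_eq_or_eq (hα : 3 ≤ ENat.card α) (hab : a ≠ b) :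
    ((completeTensor α β).induce {p | p.2 = a ∨ p.2 = b}).Connected := by
  obtain ⟨i⟩ := (ENat.card_pos_iff_nonempty α).1 (lt_of_lt_of_le (by norm_num) hα)
  have : Nonempty {p : α × β | p.2 = a ∨ p.2 = b} := ⟨⟨(i, a), .inl rfl⟩⟩
  refine ⟨fun u v => ?_⟩
  by_cases hsnd : u.1.2 = v.1.2
  · exact reachable_induce_of_snd_eq hα hab hsnd
  by_cases hfst : u.1.1 = v.1.1
  · obtain ⟨j, hju, -⟩ := ENat.exists_ne_ne_of_three_le hα u.1.1 u.1.1
    let w : {p : α × β | p.2 = a ∨ p.2 = b} := ⟨(j, v.1.2), v.2⟩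
    have huw : ((completeTensor α β).induce _).Adj u w := ⟨hju.symm, hsnd⟩
    exact huw.reachable.trans (reachable_induce_of_snd_eq hα hab rfl)
  · exact Adj.reachable ⟨hfst, hsnd⟩

end completeTensor

/-- For the coloring `β` of `H = K₃ × K₄` assigning to each vertex its second
coordinate, and any two distinct colors `a, b`, the subgraph of `H` induced by the
vertices colored `a` or `b` is connected. -/
theorem stmt6 (a b : Fin 4) (hab : a ≠ b) :
    (Htensor.induce {p : Fin 3 × Fin 4 | p.2 = a ∨ p.2 = b}).Connected := by
  rw [Htensor_eq_completeTensor]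
  exact completeTensor.connected_induce_snd_eq_or_eq (by simp) hab
end
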